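/- For all integers n ≥ 1 and k ≥ 1, the number of taxi walks of length kn satisfies c_{kn} ≥ b_n^k. -/

import Mathlib

open Filter

/-- The oriented step relation of the Manhattan lattice. -/
def taxiStep (u v : ℤ × ℤ) : Prop :=
  (Even u.2 ∧ v = (u.1 + 1, u.2)) ∨
  (Odd u.2 ∧ v = (u.1 - 1, u.2)) ∨
  (Even u.1 ∧ v = (u.1, u.2 + 1)) ∨
  (Odd u.1 ∧ v = (u.1, u.2 - 1))

/-- Perpendicularity of two step vectors. -/
def perp (d e : ℤ × ℤ) : Prop := d.1 * e.1 + d.2 * e.2 = 0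

instance (d e : ℤ × ℤ) : Decidable (perp d e) := by unfold perp; infer_instance

/-- The walk `l` turns at its `i`-th vertex (meaningful for `1 ≤ i ≤ l.length - 2`). -/
def turnAt (l : List (ℤ × ℤ)) (i : ℕ) : Prop :=
  perp (l.getD i 0 - l.getD (i - 1) 0) (l.getD (i + 1) 0 - l.getD i 0)

instance (l : List (ℤ × ℤ)) (i : ℕ) : Decidable (turnAt l i) := by
  unfold turnAt; infer_instance

/-- A taxi walk, recorded as its list of vertices (a walk of length `n` has `n + 1` vertices). -/
def IsTaxiWalk (l : List (ℤ × ℤ)) : Prop :=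
  l ≠ [] ∧ l.Nodup ∧
  (∀ i, i + 1 < l.length → taxiStep (l.getD i 0) (l.getD (i + 1) 0)) ∧
  (∀ i, 1 ≤ i → i + 2 < l.length → ¬(turnAt l i ∧ turnAt l (i + 1)))

/-- The set of taxi walks of length `n` starting at the origin. -/
def originWalks (n : ℕ) : Set (List (ℤ × ℤ)) :=
  {l | IsTaxiWalk l ∧ l.length = n + 1 ∧ l.getD 0 0 = 0}

/-- `taxiCount n` is `c_n`, the number of taxi walks of length `n` starting at the origin. -/
noncomputable def taxiCount (n : ℕ) : ℕ := (originWalks n).ncard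

/-- The turn-word of a walk: `true` (the letter `t`) where the walk turns,
`false` (the letter `s`) where it goes straight. -/
def turnWord (l : List (ℤ × ℤ)) : List Bool :=
  (List.range (l.length - 2)).map fun i => decide (turnAt l (i + 1))

/-- The encoding of a taxi walk starting at the origin: the first coordinate is `true`
(for `N`) if `v₁ = (0,1)` and `false` (for `E`) if `v₁ = (1,0)`; the second is the turn-word. -/
def encode (l : List (ℤ × ℤ)) : Bool × List Bool :=
  (decide (l.getD 1 0 = (0, 1)), turnWord l)

/-- A bridge: a taxi walk from `(0,0)` to `(1,0)` staying at abscissa `≥ 1` after the start,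
whose last step is horizontal and ends at maximal abscissa. -/
def IsBridge (l : List (ℤ × ℤ)) : Prop :=
  IsTaxiWalk l ∧ 2 ≤ l.length ∧ l.getD 0 0 = (0, 0) ∧ l.getD 1 0 = (1, 0) ∧
  (∀ i, 1 ≤ i → i < l.length → 1 ≤ (l.getD i 0).1) ∧
  (l.getD (l.length - 1) 0).2 = (l.getD (l.length - 2) 0).2 ∧
  (∀ i, i < l.length → (l.getD i 0).1 ≤ (l.getD (l.length - 1) 0).1)

/-- `bridgeCount n` is `b_n`, the number of bridges of length `n`, with `b_0 = 1`. -/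
noncomputable def bridgeCount : ℕ → ℕ
  | 0 => 1
  | n + 1 => {l : List (ℤ × ℤ) | IsBridge l ∧ l.length = n + 2}.ncard

/-- The normalizing symmetry `f_{(x,y)}` of the oriented Manhattan lattice. -/
def normMap (p : ℤ × ℤ) (q : ℤ × ℤ) : ℤ × ℤ :=
  if Even p.1 then
    (if Even p.2 then (q.1 - p.1, q.2 - p.2) else (-(q.1 - p.1), q.2 - p.2))
  else
    (if Even p.2 then (q.1 - p.1, -(q.2 - p.2)) else (-(q.1 - p.1), -(q.2 - p.2)))

/-- The vertex `v_i` is a cutvertex of the bridge `l`. -/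
def IsCutAt (l : List (ℤ × ℤ)) (i : ℕ) : Prop :=
  0 < i ∧ i + 1 < l.length ∧
  IsBridge (l.take (i + 1)) ∧
  l.getD (i + 1) 0 = l.getD i 0 + (1, 0) ∧
  IsBridge ((l.drop i).map (normMap (l.getD i 0)))

/-- An irreducible bridge: a bridge with no cutvertex. -/
def IsIrreducibleBridge (l : List (ℤ × ℤ)) : Prop :=
  IsBridge l ∧ ∀ i, ¬ IsCutAt l i

/-- `irrBridgeCount n` is `a_n`, the number of irreducible bridges of length `n`, with `a_0 = 0`. -/
noncomputable def irrBridgeCount : ℕ → ℕ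
  | 0 => 0
  | n + 1 => {l : List (ℤ × ℤ) | IsIrreducibleBridge l ∧ l.length = n + 2}.ncard


/-!
A bridge ends with an eastward step, hence on an even row, at a vertex `p` of maximal abscissa.
On such a row the lattice symmetry `shiftTo p` moves a second bridge so that it starts at `p`;
appending it gives a bridge: the two parts lie on either side of the vertical line through `p`,
so no vertex repeats, and the walk goes straight at `p`, so no double turn appears. This
concatenation is injective, whence `b_m b_n ≤ b_{m+n}`, `b_n ^ k ≤ b_{kn}`, and bridges are
taxi walks from the origin.
-/

/-- For even `p.2`, the automorphism of the oriented lattice taking the origin to `p`: a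
translation, composed with `y ↦ -y` when `p.1` is odd since odd columns point downwards. -/
def shiftTo (p q : ℤ × ℤ) : ℤ × ℤ :=
  (p.1 + q.1, p.2 + if Even p.1 then q.2 else -q.2)

@[simp]
lemma shiftTo_fst (p q : ℤ × ℤ) : (shiftTo p q).1 = p.1 + q.1 := rfl

@[simp]
lemma shiftTo_zero (p : ℤ × ℤ) : shiftTo p 0 = p := by
  simp [shiftTo]

lemma shiftTo_injective (p : ℤ × ℤ) : Function.Injective (shiftTo p) := by
  intro u v h
  simp only [shiftTo, Prod.mk.injEq] at h
  obtain ⟨h1, h2⟩ := h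
  split_ifs at h2 <;> exact Prod.ext (by linarith) (by linarith)

lemma taxiStep_shiftTo {p u v : ℤ × ℤ} (hp : Even p.2) (h : taxiStep u v) :
    taxiStep (shiftTo p u) (shiftTo p v) := by
  rw [Int.even_iff] at hp
  rcases h with ⟨h, rfl⟩ | ⟨h, rfl⟩ | ⟨h, rfl⟩ | ⟨h, rfl⟩ <;>
    simp only [taxiStep, shiftTo, Int.even_iff, Int.odd_iff, Prod.ext_iff, and_true, true_and]
      at h ⊢ <;>
    split_ifs <;> omega

lemma perp_sub_shiftTo {p u v w : ℤ × ℤ} :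
    perp (shiftTo p v - shiftTo p u) (shiftTo p w - shiftTo p v) ↔ perp (v - u) (w - v) := by
  simp only [perp, shiftTo, Prod.fst_sub, Prod.snd_sub]
  split_ifs <;> constructor <;> intro h <;> linear_combination h

lemma even_snd_of_taxiStep_add_one {u : ℤ × ℤ} (h : taxiStep u (u + (1, 0))) : Even u.2 := by
  rcases h with ⟨h, -⟩ | ⟨-, h⟩ | ⟨-, h⟩ | ⟨-, h⟩
  · exact h
  all_goals simp only [Prod.ext_iff, Prod.fst_add, Prod.snd_add] at h; omega

lemma List.exists_getD_eq_of_mem {α : Type*} {l : List α} {a : α} (d : α) (h : a ∈ l) :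
    ∃ i < l.length, l.getD i d = a := by
  obtain ⟨i, hi, rfl⟩ := List.mem_iff_getElem.1 h
  exact ⟨i, hi, List.getD_eq_getElem _ _ hi⟩

lemma List.finite_length_eq_of_forall_mem {α : Type*} {s : Set α} (hs : s.Finite) (n : ℕ) :
    {l : List α | l.length = n ∧ ∀ a ∈ l, a ∈ s}.Finite := by
  have := hs.to_subtype
  refine ((List.finite_length_eq s n).image (List.map Subtype.val)).subset ?_
  rintro l ⟨hl, hmem⟩
  lift l to List s using hmem
  exact ⟨l, by simpa using hl, rfl⟩

lemma abs_getD_le_of_taxiStep {l : List (ℤ × ℤ)} (h0 : l.getD 0 0 = 0)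
    (hsteps : ∀ i, i + 1 < l.length → taxiStep (l.getD i 0) (l.getD (i + 1) 0)) :
    ∀ i < l.length, |(l.getD i 0).1| ≤ i ∧ |(l.getD i 0).2| ≤ i := by
  intro i hi
  induction i with
  | zero => rw [h0]; simp
  | succ i ih =>
    obtain ⟨hx, hy⟩ := ih (by omega)
    simp only [abs_le] at hx hy ⊢
    rcases hsteps i hi with ⟨-, h⟩ | ⟨-, h⟩ | ⟨-, h⟩ | ⟨-, h⟩ <;>
      simp only [h] <;> push_cast <;> omega

lemma originWalks_finite (n : ℕ) : (originWalks n).Finite := by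
  refine (List.finite_length_eq_of_forall_mem
    (Set.finite_Icc ((-n, -n) : ℤ × ℤ) (n, n)) (n + 1)).subset ?_
  rintro l ⟨⟨-, -, hsteps, -⟩, hl, h0⟩
  refine ⟨hl, fun a ha => ?_⟩
  obtain ⟨i, hi, rfl⟩ := List.exists_getD_eq_of_mem 0 ha
  obtain ⟨hx, hy⟩ := abs_getD_le_of_taxiStep h0 hsteps i hi
  rw [abs_le] at hx hy
  simp only [Set.mem_Icc, Prod.le_def]
  omega

namespace IsTaxiWalk

variable {l : List (ℤ × ℤ)}

lemma nodup (h : IsTaxiWalk l) : l.Nodup := h.2.1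

lemma taxiStep_getD (h : IsTaxiWalk l) {i : ℕ} (hi : i + 1 < l.length) :
    taxiStep (l.getD i 0) (l.getD (i + 1) 0) :=
  h.2.2.1 i hi

lemma not_turnAt_and_turnAt (h : IsTaxiWalk l) {i : ℕ} (hi₁ : 1 ≤ i) (hi : i + 2 < l.length) :
    ¬(turnAt l i ∧ turnAt l (i + 1)) :=
  h.2.2.2 i hi₁ hi

end IsTaxiWalk

namespace IsBridge

variable {l : List (ℤ × ℤ)} {m : ℕ}

lemma one_le_of_length_eq (h : IsBridge l) (hl : l.length = m + 1) : 1 ≤ m := by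
  have := h.2.1
  omega

lemma getD_zero (h : IsBridge l) : l.getD 0 0 = 0 := h.2.2.1

lemma getD_one (h : IsBridge l) : l.getD 1 0 = (1, 0) := h.2.2.2.1

lemma one_le_fst (h : IsBridge l) (hl : l.length = m + 1) {i : ℕ} (hi₁ : 1 ≤ i)
    (hi : i ≤ m) : 1 ≤ (l.getD i 0).1 :=
  h.2.2.2.2.1 i hi₁ (by omega)

lemma eq_zero_cons_tail (h : IsBridge l) : l = 0 :: l.tail := by
  obtain ⟨⟨hne, -⟩, -, h0, -⟩ := h
  obtain _ | ⟨a, t⟩ := l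
  · exact absurd rfl hne
  · simp only [List.getD_cons_zero] at h0
    subst h0
    rfl

lemma fst_le_last (h : IsBridge l) (hl : l.length = m + 1) {i : ℕ} (hi : i ≤ m) :
    (l.getD i 0).1 ≤ (l.getD m 0).1 := by
  have := h.2.2.2.2.2.2 i (by omega)
  rwa [hl, Nat.add_sub_cancel] at this

lemma fst_le_last_of_mem (h : IsBridge l) (hl : l.length = m + 1) {a : ℤ × ℤ} (ha : a ∈ l) :
    a.1 ≤ (l.getD m 0).1 := by
  obtain ⟨i, hi, rfl⟩ := List.exists_getD_eq_of_mem 0 ha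
  exact h.fst_le_last hl (by omega)

lemma one_le_fst_of_mem_tail (h : IsBridge l) {a : ℤ × ℤ} (ha : a ∈ l.tail) : 1 ≤ a.1 := by
  obtain ⟨i, hi, rfl⟩ := List.exists_getD_eq_of_mem 0 ha
  have hi' : i + 1 < l.length := by rw [List.length_tail] at hi; omega
  have := h.2.2.2.2.1 (i + 1) (by omega) hi'
  rwa [List.getD_eq_getElem _ _ hi, List.getElem_tail, ← List.getD_eq_getElem _ 0 hi']

lemma getD_last_eq_add (h : IsBridge l) (hl : l.length = m + 1) :
    l.getD m 0 = l.getD (m - 1) 0 + (1, 0) := by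
  have hm := h.one_le_of_length_eq hl
  obtain ⟨hwalk, -, -, -, -, hhor, hmax⟩ := h
  have hstep := hwalk.taxiStep_getD (i := m - 1) (by omega)
  have hle := hmax (m - 1) (by omega)
  rw [Nat.sub_add_cancel hm] at hstep
  rw [hl, Nat.add_sub_cancel, show m + 1 - 2 = m - 1 by omega] at hhor
  rw [hl, Nat.add_sub_cancel] at hle
  rcases hstep with ⟨-, hv⟩ | ⟨-, hv⟩ | ⟨-, hv⟩ | ⟨-, hv⟩ <;>
    rw [hv] at hhor hle ⊢
  · simp [Prod.ext_iff]
  all_goals simp at hhor hle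

lemma even_snd_getD_last (h : IsBridge l) (hl : l.length = m + 1) : Even (l.getD m 0).2 := by
  have hm := h.one_le_of_length_eq hl
  have hstep := h.1.taxiStep_getD (i := m - 1) (by omega)
  rw [Nat.sub_add_cancel hm] at hstep
  rw [h.getD_last_eq_add hl] at hstep ⊢
  simpa using even_snd_of_taxiStep_add_one hstep

end IsBridge

def joinBridges (l l' : List (ℤ × ℤ)) : List (ℤ × ℤ) :=
  l ++ l'.tail.map (shiftTo (l.getD (l.length - 1) 0))

section joinBridges

variable {l l' : List (ℤ × ℤ)} {m n : ℕ}

lemma joinBridges_eq (hl : l.length = m + 1) :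
    joinBridges l l' = l ++ l'.tail.map (shiftTo (l.getD m 0)) := by
  rw [joinBridges, hl, Nat.add_sub_cancel]

lemma length_joinBridges (hl : l.length = m + 1) (hl' : l'.length = n + 1) :
    (joinBridges l l').length = m + n + 1 := by
  simp only [joinBridges, List.length_append, List.length_map, List.length_tail, hl, hl']
  omega

lemma getD_joinBridges_of_le (hl : l.length = m + 1) {i : ℕ} (hi : i ≤ m) :
    (joinBridges l l').getD i 0 = l.getD i 0 :=
  List.getD_append _ _ _ _ (by omega)

lemma getD_joinBridges_add (hl : l.length = m + 1) (h0 : l'.getD 0 0 = 0) {j : ℕ}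
    (hj : j < l'.length) :
    (joinBridges l l').getD (m + j) 0 = shiftTo (l.getD m 0) (l'.getD j 0) := by
  obtain _ | j := j
  · rw [h0, shiftTo_zero]
    exact getD_joinBridges_of_le hl le_rfl
  have hj' : j < l'.tail.length := by rw [List.length_tail]; omega
  rw [joinBridges_eq hl, List.getD_append_right _ _ _ _ (by omega), hl,
    show m + (j + 1) - (m + 1) = j by omega, List.getD_eq_getElem _ _ (by simpa using hj'),
    List.getElem_map, List.getElem_tail, List.getD_eq_getElem _ _ hj]

lemma nodup_joinBridges (hb : IsBridge l) (hb' : IsBridge l') (hl : l.length = m + 1) :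
    (joinBridges l l').Nodup := by
  rw [joinBridges_eq hl]
  refine hb.1.nodup.append ((hb'.1.nodup.sublist (List.tail_sublist l')).map (shiftTo_injective _))
    fun a ha hat => ?_
  obtain ⟨c, hc, rfl⟩ := List.mem_map.1 hat
  have hleft := hb.fst_le_last_of_mem hl ha
  have hright := hb'.one_le_fst_of_mem_tail hc
  rw [shiftTo_fst] at hleft
  omega

lemma taxiStep_joinBridges (hb : IsBridge l) (hb' : IsBridge l') (hl : l.length = m + 1)
    (hl' : l'.length = n + 1) {i : ℕ} (hi : i + 1 < m + n + 1) :
    taxiStep ((joinBridges l l').getD i 0) ((joinBridges l l').getD (i + 1) 0) := by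
  rcases le_or_gt (i + 1) m with hi' | hi'
  · rw [getD_joinBridges_of_le hl (by omega), getD_joinBridges_of_le hl hi']
    exact hb.1.taxiStep_getD (by omega)
  · obtain ⟨j, rfl⟩ : ∃ j, i = m + j := ⟨i - m, by omega⟩
    rw [getD_joinBridges_add hl hb'.getD_zero (by omega), add_assoc,
      getD_joinBridges_add hl hb'.getD_zero (by omega)]
    exact taxiStep_shiftTo (hb.even_snd_getD_last hl) (hb'.1.taxiStep_getD (by omega))

lemma turnAt_joinBridges_of_lt (hl : l.length = m + 1) {i : ℕ} (hi : i < m) :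
    turnAt (joinBridges l l') i ↔ turnAt l i := by
  simp only [turnAt]
  rw [getD_joinBridges_of_le (i := i - 1) hl (by omega), getD_joinBridges_of_le (i := i) hl
    (by omega), getD_joinBridges_of_le (i := i + 1) hl (by omega)]

lemma turnAt_joinBridges_add (hl : l.length = m + 1) (h0 : l'.getD 0 0 = 0) {j : ℕ}
    (hj : 1 ≤ j) (hj' : j + 1 < l'.length) :
    turnAt (joinBridges l l') (m + j) ↔ turnAt l' j := by
  simp only [turnAt]
  rw [show m + j - 1 = m + (j - 1) by omega, show m + j + 1 = m + (j + 1) by omega,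
    getD_joinBridges_add (j := j - 1) hl h0 (by omega),
    getD_joinBridges_add (j := j) hl h0 (by omega), getD_joinBridges_add (j := j + 1) hl h0 hj']
  exact perp_sub_shiftTo

lemma not_turnAt_joinBridges (hb : IsBridge l) (hb' : IsBridge l') (hl : l.length = m + 1) :
    ¬ turnAt (joinBridges l l') m := by
  have hm := hb.one_le_of_length_eq hl
  simp only [turnAt]
  rw [getD_joinBridges_of_le (i := m - 1) hl (by omega), getD_joinBridges_of_le hl le_rfl,
    getD_joinBridges_add (j := 1) hl hb'.getD_zero hb'.2.1, hb'.getD_one,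
    hb.getD_last_eq_add hl]
  simp [perp, shiftTo]

lemma not_turnAt_and_turnAt_joinBridges (hb : IsBridge l) (hb' : IsBridge l')
    (hl : l.length = m + 1) (hl' : l'.length = n + 1) {i : ℕ} (hi₁ : 1 ≤ i)
    (hi : i + 2 < m + n + 1) :
    ¬ (turnAt (joinBridges l l') i ∧ turnAt (joinBridges l l') (i + 1)) := by
  rintro ⟨hturn, hturn'⟩
  by_cases hlt : i + 1 < m
  · exact hb.1.not_turnAt_and_turnAt hi₁ (by omega)
      ⟨(turnAt_joinBridges_of_lt hl (by omega)).1 hturn,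
        (turnAt_joinBridges_of_lt hl hlt).1 hturn'⟩
  by_cases hjunction : i + 1 = m ∨ i = m
  · rcases hjunction with rfl | rfl
    exacts [not_turnAt_joinBridges hb hb' hl hturn', not_turnAt_joinBridges hb hb' hl hturn]
  obtain ⟨j, rfl⟩ : ∃ j, i = m + j := ⟨i - m, by omega⟩
  rw [add_assoc] at hturn'
  exact hb'.1.not_turnAt_and_turnAt (i := j) (by omega) (by omega)
    ⟨(turnAt_joinBridges_add hl hb'.getD_zero (by omega) (by omega)).1 hturn,
      (turnAt_joinBridges_add hl hb'.getD_zero (by omega) (by omega)).1 hturn'⟩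

lemma isTaxiWalk_joinBridges (hb : IsBridge l) (hb' : IsBridge l') (hl : l.length = m + 1)
    (hl' : l'.length = n + 1) : IsTaxiWalk (joinBridges l l') := by
  have hlen := length_joinBridges hl hl'
  refine ⟨List.ne_nil_of_length_pos (by omega), nodup_joinBridges hb hb' hl,
    fun i hi => ?_, fun i hi₁ hi => ?_⟩
  · exact taxiStep_joinBridges hb hb' hl hl' (hlen ▸ hi)
  · exact not_turnAt_and_turnAt_joinBridges hb hb' hl hl' hi₁ (hlen ▸ hi)

lemma isBridge_joinBridges (hb : IsBridge l) (hb' : IsBridge l') (hl : l.length = m + 1)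
    (hl' : l'.length = n + 1) : IsBridge (joinBridges l l') := by
  have hm := hb.one_le_of_length_eq hl
  have hn := hb'.one_le_of_length_eq hl'
  have hlen := length_joinBridges hl hl'
  have hright : ∀ j ≤ n,
      (joinBridges l l').getD (m + j) 0 = shiftTo (l.getD m 0) (l'.getD j 0) :=
    fun j hj => getD_joinBridges_add hl hb'.getD_zero (by omega)
  rw [IsBridge, hlen, Nat.add_sub_cancel, show m + n + 1 - 2 = m + (n - 1) by omega]
  refine ⟨isTaxiWalk_joinBridges hb hb' hl hl', by omega, ?_, ?_, fun i hi₁ hi => ?_, ?_,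
    fun i hi => ?_⟩
  · rw [getD_joinBridges_of_le hl (Nat.zero_le m)]
    exact hb.getD_zero
  · rw [getD_joinBridges_of_le hl hm]
    exact hb.getD_one
  · rcases le_or_gt i m with him | him
    · rw [getD_joinBridges_of_le hl him]
      exact hb.one_le_fst hl hi₁ him
    · obtain ⟨j, rfl⟩ : ∃ j, i = m + j := ⟨i - m, by omega⟩
      rw [hright j (by omega), shiftTo_fst]
      have := hb.one_le_fst hl hm le_rfl
      have := hb'.one_le_fst hl' (i := j) (by omega) (by omega)
      omega
  · rw [hright n le_rfl, hright (n - 1) (by omega), hb'.getD_last_eq_add hl']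
    simp only [shiftTo, Prod.snd_add, add_zero]
  · rw [hright n le_rfl, shiftTo_fst]
    have hn' := hb'.one_le_fst hl' hn le_rfl
    rcases le_or_gt i m with him | him
    · rw [getD_joinBridges_of_le hl him]
      have := hb.fst_le_last hl him
      omega
    · obtain ⟨j, rfl⟩ : ∃ j, i = m + j := ⟨i - m, by omega⟩
      rw [hright j (by omega), shiftTo_fst]
      have := hb'.fst_le_last hl' (i := j) (by omega)
      omega

end joinBridges

def bridges (n : ℕ) : Set (List (ℤ × ℤ)) := {l | IsBridge l ∧ l.length = n + 1}

lemma bridgeCount_eq_ncard {n : ℕ} (hn : n ≠ 0) : bridgeCount n = (bridges n).ncard := by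
  obtain ⟨n, rfl⟩ := Nat.exists_eq_succ_of_ne_zero hn
  rfl

lemma bridges_subset_originWalks (n : ℕ) : bridges n ⊆ originWalks n :=
  fun _ ⟨hb, hl⟩ => ⟨hb.1, hl, hb.getD_zero⟩

lemma injOn_joinBridges (m n : ℕ) :
    Set.InjOn (fun q : List (ℤ × ℤ) × List (ℤ × ℤ) => joinBridges q.1 q.2)
      (bridges m ×ˢ bridges n) := by
  rintro ⟨a, b⟩ ⟨⟨-, ha⟩, hb, -⟩ ⟨c, d⟩ ⟨⟨-, hc⟩, hd, -⟩ h
  dsimp only at ha hb hc hd h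
  rw [joinBridges_eq ha, joinBridges_eq hc] at h
  obtain ⟨rfl, htail⟩ := List.append_inj h (ha.trans hc.symm)
  rw [hb.eq_zero_cons_tail, hd.eq_zero_cons_tail,
    List.map_injective_iff.2 (shiftTo_injective _) htail]

lemma ncard_bridges_mul_le (m n : ℕ) :
    (bridges m).ncard * (bridges n).ncard ≤ (bridges (m + n)).ncard := by
  rw [← Set.ncard_prod]
  refine Set.ncard_le_ncard_of_injOn _ ?_ (injOn_joinBridges m n)
    ((originWalks_finite _).subset (bridges_subset_originWalks _))
  rintro ⟨a, b⟩ ⟨⟨ha, hal⟩, hb, hbl⟩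
  exact ⟨isBridge_joinBridges ha hb hal hbl, length_joinBridges hal hbl⟩

lemma bridgeCount_mul_le (m n : ℕ) : bridgeCount m * bridgeCount n ≤ bridgeCount (m + n) := by
  rcases Nat.eq_zero_or_pos m with rfl | hm
  · simp [bridgeCount]
  rcases Nat.eq_zero_or_pos n with rfl | hn
  · simp [bridgeCount]
  rw [bridgeCount_eq_ncard hm.ne', bridgeCount_eq_ncard hn.ne', bridgeCount_eq_ncard (by omega)]
  exact ncard_bridges_mul_le m n

lemma bridgeCount_pow_le (n k : ℕ) : bridgeCount n ^ k ≤ bridgeCount (k * n) := by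
  induction k with
  | zero => simp [bridgeCount]
  | succ k ih =>
    calc bridgeCount n ^ (k + 1) = bridgeCount n ^ k * bridgeCount n := pow_succ _ _
      _ ≤ bridgeCount (k * n) * bridgeCount n := Nat.mul_le_mul_right _ ih
      _ ≤ bridgeCount ((k + 1) * n) := by rw [Nat.succ_mul]; exact bridgeCount_mul_le _ _

lemma bridgeCount_le_taxiCount (n : ℕ) : bridgeCount n ≤ taxiCount n := by
  rcases Nat.eq_zero_or_pos n with rfl | hn
  · refine (Set.ncard_pos (originWalks_finite 0)).2 ⟨[0], ?_, rfl, rfl⟩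
    simp [IsTaxiWalk]
  rw [bridgeCount_eq_ncard hn.ne']
  exact Set.ncard_le_ncard (bridges_subset_originWalks n) (originWalks_finite n)

theorem taxiCount_ge_bridgeCount_pow_general (n k : ℕ) :
    bridgeCount n ^ k ≤ taxiCount (k * n) :=
  (bridgeCount_pow_le n k).trans (bridgeCount_le_taxiCount _)

/-- For all integers `n ≥ 1` and `k ≥ 1`, the number of taxi walks of
length `k·n` satisfies `c_{kn} ≥ b_n^k`. -/
theorem taxiCount_ge_bridgeCount_pow (n k : ℕ) (hn : 1 ≤ n) (hk : 1 ≤ k) :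
    bridgeCount n ^ k ≤ taxiCount (k * n) :=
  taxiCount_ge_bridgeCount_pow_general n k
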